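/- Fix W, W̃ ∈ ℂ^{n×n}, ε ≥ 0, and a positive integer k, and let C_k be the transition matrix of the directed cycle on k vertices. Then C_k ⊗ W̃ is a complex ε-approximation of C_k ⊗ W if and only if for every z ∈ ℂ with z^k = 1, z·W̃ is a complex ε-approximation of z·W. -/

import Mathlib

open Matrix Kronecker

noncomputable section

/-- The sesquilinear form `x* A y`. -/
def sesq {m : Type*} [Fintype m] (A : Matrix m m ℂ) (x y : m → ℂ) : ℂ :=
  star x ⬝ᵥ (A *ᵥ y)

/-- The squared Euclidean norm of a complex vector. -/
def vnormSq {m : Type*} [Fintype m] (x : m → ℂ) : ℝ :=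
  ∑ i, Complex.normSq (x i)

/-- `W̃` is a *complex ε-approximation* of `W`. -/
def ComplexApprox {m : Type*} [Fintype m] (ε : ℝ) (W Wt : Matrix m m ℂ) : Prop :=
  ∀ x y : m → ℂ,
    ‖sesq (W - Wt) x y‖ ≤
      ε / 2 * (vnormSq x + vnormSq y - (sesq W x x + sesq W y y).re)

/-- Transition matrix of the directed `k`-cycle (over `ℂ`):
`(C_k)_{ij} = 1` iff `i ≡ j+1 (mod k)`. -/
def cycleC (k : ℕ) : Matrix (Fin k) (Fin k) ℂ :=
  Matrix.of fun i j => if (i : ℕ) = ((j : ℕ) + 1) % k then 1 else 0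

/-!
For a primitive `k`-th root of unity `ω`, the normalized Fourier matrix `F = (ω̄^{it}/√k)` is
unitary and diagonalizes the cycle: `C_k = F · diag(ω^t) · F*`. Hence `C_k ⊗ W` is unitarily
equivalent to `diag(ω^t) ⊗ W`, the block-diagonal matrix with blocks `ω^t W`. Complex
approximation is invariant under unitary conjugation, since the unitary only reparametrizes the
vectors `x, y` while preserving their norms. It also splits over the blocks: vectors supported on
a single block give one direction, and summing the blockwise inequalities (triangle inequality)
gives the other. Finally, the `k`-th roots of unity are exactly the `ω^t`.
-/

section Forms

variable {m m' : Type*} [Fintype m] [Fintype m']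

lemma sesq_sub (A B : Matrix m m ℂ) (x y : m → ℂ) :
    sesq (A - B) x y = sesq A x y - sesq B x y := by
  simp only [sesq, sub_mulVec, dotProduct_sub]

lemma sesq_smul (c : ℂ) (A : Matrix m m ℂ) (x y : m → ℂ) :
    sesq (c • A) x y = c * sesq A x y := by
  simp only [sesq, smul_mulVec, dotProduct_smul, smul_eq_mul]

lemma sesq_conjTranspose_mul_mul (V : Matrix m m' ℂ) (A : Matrix m m ℂ) (x y : m' → ℂ) :
    sesq (Vᴴ * A * V) x y = sesq A (V *ᵥ x) (V *ᵥ y) := by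
  rw [sesq, sesq, ← mulVec_mulVec, ← mulVec_mulVec, dotProduct_mulVec, star_mulVec]

lemma vnormSq_eq_re_dotProduct (x : m → ℂ) : vnormSq x = (star x ⬝ᵥ x).re := by
  simp [vnormSq, dotProduct, Complex.mul_re, Complex.normSq_apply]

variable [DecidableEq m']

lemma vnormSq_mulVec_of_conjTranspose_mul_self (V : Matrix m m' ℂ) (hV : Vᴴ * V = 1)
    (x : m' → ℂ) : vnormSq (V *ᵥ x) = vnormSq x := by
  rw [vnormSq_eq_re_dotProduct, vnormSq_eq_re_dotProduct, star_mulVec, ← dotProduct_mulVec,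
    mulVec_mulVec, hV, one_mulVec]

theorem ComplexApprox.conjTranspose_mul_mul_same {ε : ℝ} {A B : Matrix m m ℂ}
    (h : ComplexApprox ε A B) {V : Matrix m m' ℂ} (hV : Vᴴ * V = 1) :
    ComplexApprox ε (Vᴴ * A * V) (Vᴴ * B * V) := by
  intro x y
  simpa only [← Matrix.mul_sub, ← Matrix.sub_mul, sesq_conjTranspose_mul_mul,
    vnormSq_mulVec_of_conjTranspose_mul_self V hV] using h (V *ᵥ x) (V *ᵥ y)

theorem complexApprox_unitary_conj_iff [DecidableEq m] {ε : ℝ} {U : Matrix m m ℂ}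
    (hU : U ∈ unitaryGroup m ℂ) {A B : Matrix m m ℂ} :
    ComplexApprox ε (U * A * Uᴴ) (U * B * Uᴴ) ↔ ComplexApprox ε A B := by
  have hUU : Uᴴ * U = 1 := mem_unitaryGroup_iff'.mp hU
  have hUU' : Uᴴᴴ * Uᴴ = 1 := by
    rw [conjTranspose_conjTranspose]; exact mem_unitaryGroup_iff.mp hU
  have hcancel : ∀ M : Matrix m m ℂ, Uᴴ * (U * M * Uᴴ) * U = M := fun M => by
    rw [Matrix.mul_assoc, Matrix.mul_assoc, hUU, Matrix.mul_one, ← Matrix.mul_assoc, hUU,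
      Matrix.one_mul]
  refine ⟨fun h => ?_, fun h => ?_⟩
  · simpa only [hcancel] using h.conjTranspose_mul_mul_same hUU
  · simpa only [conjTranspose_conjTranspose] using h.conjTranspose_mul_mul_same hUU'

end Forms

section BlockDiagonal

variable {ι m : Type*} [Fintype ι] [DecidableEq ι] [Fintype m]

lemma sesq_diagonal_kronecker (d : ι → ℂ) (A : Matrix m m ℂ) (x y : ι × m → ℂ) :
    sesq (diagonal d ⊗ₖ A) x y =
      ∑ t, sesq (d t • A) (Function.curry x t) (Function.curry y t) := by
  simp [sesq, dotProduct, mulVec, Fintype.sum_prod_type, kroneckerMap_apply, diagonal_apply,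
    Finset.mul_sum, ite_mul, mul_assoc, mul_left_comm]

omit [DecidableEq ι] in
lemma vnormSq_prod (x : ι × m → ℂ) : vnormSq x = ∑ t, vnormSq (Function.curry x t) :=
  Fintype.sum_prod_type _

lemma sesq_diagonal_kronecker_uncurry_single (d : ι → ℂ) (A : Matrix m m ℂ) (t : ι)
    (x y : m → ℂ) :
    sesq (diagonal d ⊗ₖ A) (Function.uncurry (Pi.single t x)) (Function.uncurry (Pi.single t y))
      = sesq (d t • A) x y := by
  rw [sesq_diagonal_kronecker, Fintype.sum_eq_single t fun s hs => by
    simp [sesq, Pi.single_eq_of_ne hs]]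
  simp

lemma vnormSq_uncurry_single (t : ι) (x : m → ℂ) :
    vnormSq (Function.uncurry (Pi.single t x)) = vnormSq x := by
  rw [vnormSq_prod, Fintype.sum_eq_single t fun s hs => by simp [vnormSq, Pi.single_eq_of_ne hs]]
  simp

theorem complexApprox_diagonal_kronecker_iff {ε : ℝ} (d : ι → ℂ) (A B : Matrix m m ℂ) :
    ComplexApprox ε (diagonal d ⊗ₖ A) (diagonal d ⊗ₖ B) ↔
      ∀ t, ComplexApprox ε (d t • A) (d t • B) := by
  refine ⟨fun h t x y => ?_, fun h x y => ?_⟩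
  · simpa only [sesq_sub, sesq_diagonal_kronecker_uncurry_single, vnormSq_uncurry_single]
      using h (Function.uncurry (Pi.single t x)) (Function.uncurry (Pi.single t y))
  · rw [sesq_sub, sesq_diagonal_kronecker, sesq_diagonal_kronecker, sesq_diagonal_kronecker,
      sesq_diagonal_kronecker, vnormSq_prod x, vnormSq_prod y, ← Finset.sum_sub_distrib]
    calc _ ≤ ∑ t, ‖sesq (d t • A) (Function.curry x t) (Function.curry y t) -
          sesq (d t • B) (Function.curry x t) (Function.curry y t)‖ := norm_sum_le _ _
      _ ≤ ∑ t, ε / 2 * (vnormSq (Function.curry x t) + vnormSq (Function.curry y t) -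
          (sesq (d t • A) (Function.curry x t) (Function.curry x t) +
            sesq (d t • A) (Function.curry y t) (Function.curry y t)).re) :=
        Finset.sum_le_sum fun t _ => by
          simpa only [sesq_sub] using h t (Function.curry x t) (Function.curry y t)
      _ = _ := by
        simp only [← Finset.mul_sum, Finset.sum_sub_distrib, Finset.sum_add_distrib,
          ← Complex.re_sum]

end BlockDiagonal

section Fourier

variable {k : ℕ} {ω : ℂ}

theorem IsPrimitiveRoot.sum_pow_mul_star_pow (hω : IsPrimitiveRoot ω k) (i j : ℕ) :
    ∑ t : Fin k, (ω ^ i) ^ (t : ℕ) * star ((ω ^ j) ^ (t : ℕ)) =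
      if i ≡ j [MOD k] then (k : ℂ) else 0 := by
  obtain rfl | hk := eq_or_ne k 0
  · simp
  have hω0 : ω ≠ 0 := hω.ne_zero hk
  have hstar : ∀ l : ℕ, star (ω ^ l) = (ω ^ l)⁻¹ := fun l => by
    rw [Complex.inv_eq_conj (by rw [norm_pow, hω.norm'_eq_one hk, one_pow])]; rfl
  set z := ω ^ i * (ω ^ j)⁻¹ with hz
  have hterm : ∀ t : ℕ, (ω ^ i) ^ t * star ((ω ^ j) ^ t) = z ^ t := fun t => by
    rw [star_pow, hstar, mul_pow, inv_pow]
  simp only [hterm, Fin.sum_univ_eq_sum_range (fun t => z ^ t)]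
  have hz1 : z = 1 ↔ i ≡ j [MOD k] := by
    rw [hz, mul_inv_eq_one₀ (pow_ne_zero _ hω0), (hω.isOfFinOrder hk).pow_eq_pow_iff_modEq,
      ← hω.eq_orderOf]
  split_ifs with hij
  · simp [hz1.mpr hij]
  · have hzk : z ^ k = 1 := by
      rw [hz, mul_pow, inv_pow, ← pow_mul, ← pow_mul, mul_comm i, mul_comm j, pow_mul, pow_mul,
        hω.pow_eq_one, one_pow, one_pow, inv_one, mul_one]
    rw [geom_sum_eq (mt hz1.mp hij), hzk, sub_self, zero_div]

def fourierMatrix (k : ℕ) (ω : ℂ) : Matrix (Fin k) (Fin k) ℂ :=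
  of fun i t => star ((ω ^ (i : ℕ)) ^ (t : ℕ))

lemma fourierMatrix_conjTranspose_mul_self (hω : IsPrimitiveRoot ω k) :
    (fourierMatrix k ω)ᴴ * fourierMatrix k ω = (k : ℝ) • 1 := by
  ext s t
  simp only [fourierMatrix, mul_apply, conjTranspose_apply, of_apply, star_star]
  rw [Finset.sum_congr rfl fun j _ => by
      rw [pow_right_comm ω (j : ℕ), pow_right_comm ω (j : ℕ)],
    hω.sum_pow_mul_star_pow]
  simp only [Matrix.smul_apply, one_apply, Nat.ModEq, Nat.mod_eq_of_lt s.isLt,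
    Nat.mod_eq_of_lt t.isLt, Fin.val_inj]
  split_ifs <;> simp

lemma fourierMatrix_mul_diagonal_mul_conjTranspose (hω : IsPrimitiveRoot ω k) :
    fourierMatrix k ω * diagonal (fun t : Fin k => ω ^ (t : ℕ)) * (fourierMatrix k ω)ᴴ =
      (k : ℝ) • cycleC k := by
  ext i j
  have hterm : ∀ t : ℕ,
      star ((ω ^ (i : ℕ)) ^ t) * ω ^ t * star (star ((ω ^ (j : ℕ)) ^ t)) =
      (ω ^ ((j : ℕ) + 1)) ^ t * star ((ω ^ (i : ℕ)) ^ t) := fun t => by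
    rw [star_star, pow_succ, mul_pow]; ring
  simp only [mul_apply, diagonal_apply, mul_ite, mul_zero, Finset.sum_ite_eq', Finset.mem_univ,
    if_true, fourierMatrix, conjTranspose_apply, of_apply, hterm, hω.sum_pow_mul_star_pow,
    Matrix.smul_apply, cycleC, Nat.ModEq, Nat.mod_eq_of_lt i.isLt, eq_comm (b := (i : ℕ))]
  split_ifs <;> simp

lemma inv_sqrt_mul_inv_sqrt_mul_self {r : ℝ} (hr : 0 < r) :
    (√r)⁻¹ * (√r)⁻¹ * r = 1 := by
  rw [← mul_inv, Real.mul_self_sqrt hr.le, inv_mul_cancel₀ hr.ne']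

lemma inv_sqrt_smul_fourierMatrix_mem_unitaryGroup (hω : IsPrimitiveRoot ω k) (hk : 0 < k) :
    (√(k : ℝ))⁻¹ • fourierMatrix k ω ∈ unitaryGroup (Fin k) ℂ := by
  rw [mem_unitaryGroup_iff', star_eq_conjTranspose, conjTranspose_smul, star_trivial,
    smul_mul_smul_comm, fourierMatrix_conjTranspose_mul_self hω, smul_smul,
    inv_sqrt_mul_inv_sqrt_mul_self (Nat.cast_pos.mpr hk), one_smul]

lemma cycleC_eq_unitary_conj_diagonal (hω : IsPrimitiveRoot ω k) (hk : 0 < k) :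
    cycleC k =
      ((√(k : ℝ))⁻¹ • fourierMatrix k ω) * diagonal (fun t : Fin k => ω ^ (t : ℕ)) *
        ((√(k : ℝ))⁻¹ • fourierMatrix k ω)ᴴ := by
  rw [conjTranspose_smul, star_trivial, smul_mul, smul_mul, Matrix.mul_smul,
    fourierMatrix_mul_diagonal_mul_conjTranspose hω, smul_smul, smul_smul,
    inv_sqrt_mul_inv_sqrt_mul_self (Nat.cast_pos.mpr hk), one_smul]

end Fourier

lemma mul_mul_conjTranspose_kronecker {ι m : Type*} [Fintype ι] [Fintype m] [DecidableEq m]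
    (U D : Matrix ι ι ℂ) (A : Matrix m m ℂ) :
    (U * D * Uᴴ) ⊗ₖ A = (U ⊗ₖ 1) * (D ⊗ₖ A) * (U ⊗ₖ 1)ᴴ := by
  rw [conjTranspose_kronecker, conjTranspose_one, ← mul_kronecker_mul, ← mul_kronecker_mul,
    Matrix.one_mul, Matrix.mul_one]

theorem cycleLift_approx_iff_roots_of_unity_general {n : ℕ} (ε : ℝ)
    (k : ℕ) (hk : 0 < k) (W Wt : Matrix (Fin n) (Fin n) ℂ) :
    ComplexApprox ε (cycleC k ⊗ₖ W) (cycleC k ⊗ₖ Wt) ↔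
      ∀ z : ℂ, z ^ k = 1 → ComplexApprox ε (z • W) (z • Wt) := by
  have : NeZero k := ⟨hk.ne'⟩
  obtain ⟨ω, hω⟩ : ∃ ω : ℂ, IsPrimitiveRoot ω k := ⟨_, Complex.isPrimitiveRoot_exp k hk.ne'⟩
  have hU : ((√(k : ℝ))⁻¹ • fourierMatrix k ω) ⊗ₖ (1 : Matrix (Fin n) (Fin n) ℂ) ∈
      unitaryGroup (Fin k × Fin n) ℂ :=
    kronecker_mem_unitary (inv_sqrt_smul_fourierMatrix_mem_unitaryGroup hω hk) (one_mem _)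
  rw [cycleC_eq_unitary_conj_diagonal hω hk, mul_mul_conjTranspose_kronecker,
    mul_mul_conjTranspose_kronecker, complexApprox_unitary_conj_iff hU,
    complexApprox_diagonal_kronecker_iff]
  refine ⟨fun h z hz => ?_, fun h t => h _ ?_⟩
  · obtain ⟨t, ht, rfl⟩ := hω.eq_pow_of_pow_eq_one hz
    exact h ⟨t, ht⟩
  · rw [← pow_mul, mul_comm, pow_mul, hω.pow_eq_one, one_pow]

/-- `C_k ⊗ W̃` is a complex ε-approximation of `C_k ⊗ W` iff
for every `k`-th root of unity `z`, `z·W̃` is a complex ε-approximation of `z·W`. -/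
theorem cycleLift_approx_iff_roots_of_unity {n : ℕ} (ε : ℝ) (hε : 0 ≤ ε)
    (k : ℕ) (hk : 0 < k) (W Wt : Matrix (Fin n) (Fin n) ℂ) :
    ComplexApprox ε (cycleC k ⊗ₖ W) (cycleC k ⊗ₖ Wt) ↔
      ∀ z : ℂ, z ^ k = 1 → ComplexApprox ε (z • W) (z • Wt) :=
  cycleLift_approx_iff_roots_of_unity_general ε k hk W Wt

end
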